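/- Let H be a complex Hilbert space and x_1,...,x_n, y_1,...,y_n ∈ H. Then ∑_{i=1}^n x_i ⊗ y_i = 0 if and only if there exists an n×n complex matrix A with all entries of modulus at most 1 such that (x_1,...,x_n)(I−A) = 0 and (y_1,...,y_n)A* = 0 (as rows of vectors). -/

import Mathlib

/-!
Let `T = rowMap x : ℂⁿ → H`, `c ↦ ∑ cᵢ xᵢ`, and let `A` be the matrix of the orthogonal
projection onto `(ker T)ᗮ`. Its entries are bounded by `1` because a projection is a contraction,
`I - A` is the projection onto `ker T`, so `x (I - A) = 0`, and since `A` is Hermitian the rows of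
`conj A` are projections of basis vectors, hence lie in `(ker T)ᗮ`. Now `∑ xᵢ ⊗ yᵢ = 0` says
exactly that `(⟪yᵢ, h⟫)ᵢ ∈ ker T` for every `h`, and pairing with `c ⊥ ker T` gives
`⟪h, ∑ cᵢ yᵢ⟫ = 0`, so `y A* = 0`. Conversely, `x = x A` turns `∑ⱼ xⱼ ⊗ yⱼ` into
`∑ᵢ xᵢ ⊗ (y A*)ᵢ = 0`.
-/

noncomputable section

open scoped ComplexConjugate

/-- The rank-one operator `x ⊗ y : h ↦ ⟨h, y⟩ x` (inner product linear in `h`). -/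
noncomputable def rankOne {H : Type*} [NormedAddCommGroup H] [InnerProductSpace ℂ H]
    (x y : H) : H →L[ℂ] H :=
  (innerSL ℂ y).smulRight x

open scoped InnerProductSpace

section RankOne

variable {H : Type*} [NormedAddCommGroup H] [InnerProductSpace ℂ H]

@[simp]
theorem rankOne_apply (x y h : H) : rankOne x y h = ⟪y, h⟫_ℂ • x := rfl

theorem rankOne_smul_left (c : ℂ) (x y : H) : rankOne (c • x) y = rankOne x (conj c • y) := by
  ext h
  simp [smul_smul, mul_comm]

theorem rankOne_sum_left {ι : Type*} (s : Finset ι) (x : ι → H) (y : H) :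
    rankOne (∑ i ∈ s, x i) y = ∑ i ∈ s, rankOne (x i) y := by
  ext h
  simp [Finset.smul_sum]

theorem rankOne_sum_right {ι : Type*} (s : Finset ι) (x : H) (y : ι → H) :
    rankOne x (∑ i ∈ s, y i) = ∑ i ∈ s, rankOne x (y i) := by
  ext h
  simp [Finset.sum_smul]

@[simp]
theorem rankOne_zero_right (x : H) : rankOne x (0 : H) = 0 := by
  ext h
  simp

end RankOne

section Rows

variable {ι H : Type*} [Fintype ι] [NormedAddCommGroup H] [InnerProductSpace ℂ H]

theorem sum_rankOne_eq_zero_of_row_relations [DecidableEq ι] (x y : ι → H) (A : Matrix ι ι ℂ)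
    (hx : ∀ j, ∑ i, (1 - A) i j • x i = 0) (hy : ∀ i, ∑ j, conj (A i j) • y j = 0) :
    ∑ i, rankOne (x i) (y i) = 0 := by
  have hxA : ∀ j, x j = ∑ i, A i j • x i := fun j => by
    simpa [Matrix.sub_apply, Matrix.one_apply, sub_smul, ite_smul, Finset.sum_sub_distrib,
      sub_eq_zero] using hx j
  calc ∑ j, rankOne (x j) (y j) = ∑ j, ∑ i, rankOne (x i) (conj (A i j) • y j) := by
        refine Finset.sum_congr rfl fun j _ => ?_
        rw [hxA j, rankOne_sum_left]
        simp_rw [rankOne_smul_left]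
    _ = ∑ i, rankOne (x i) (∑ j, conj (A i j) • y j) := by
        rw [Finset.sum_comm]
        simp_rw [rankOne_sum_right]
    _ = 0 := by simp [hy]

def rowMap (x : ι → H) : EuclideanSpace ℂ ι →ₗ[ℂ] H :=
  Fintype.linearCombination ℂ x ∘ₗ (WithLp.linearEquiv 2 ℂ (ι → ℂ)).toLinearMap

@[simp]
theorem rowMap_apply (x : ι → H) (c : EuclideanSpace ℂ ι) : rowMap x c = ∑ i, c i • x i := by
  simp [rowMap, Fintype.linearCombination_apply]

theorem rowMap_eq_zero_of_mem_orthogonal_ker {x y : ι → H} (h : ∑ i, rankOne (x i) (y i) = 0)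
    {c : EuclideanSpace ℂ ι} (hc : c ∈ (LinearMap.ker (rowMap x))ᗮ) : rowMap y c = 0 := by
  have hker (g : H) : WithLp.toLp 2 (fun i => ⟪y i, g⟫_ℂ) ∈ LinearMap.ker (rowMap x) := by
    simpa using congr($h g)
  have horth (g : H) : ⟪g, rowMap y c⟫_ℂ = 0 := by
    rw [← (Submodule.mem_orthogonal _ _).1 hc _ (hker g)]
    simp [PiLp.inner_apply]
  exact inner_self_eq_zero.1 (horth _)

variable [DecidableEq ι]

def projMatrix (K : Submodule ℂ (EuclideanSpace ℂ ι)) : Matrix ι ι ℂ :=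
  Matrix.of fun i j => K.starProjection (EuclideanSpace.single j 1) i

variable (K : Submodule ℂ (EuclideanSpace ℂ ι))

theorem projMatrix_apply_eq_inner (i j : ι) :
    projMatrix K i j =
      ⟪EuclideanSpace.single i (1 : ℂ), K.starProjection (EuclideanSpace.single j 1)⟫_ℂ := by
  simp [projMatrix, EuclideanSpace.inner_single_left]

theorem norm_projMatrix_apply_le (i j : ι) : ‖projMatrix K i j‖ ≤ 1 :=
  (PiLp.norm_apply_le _ i).trans ((K.norm_starProjection_apply_le _).trans (by simp))

theorem projMatrix_orthogonal : projMatrix Kᗮ = 1 - projMatrix K := by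
  ext i j
  simp [projMatrix, Matrix.one_apply]

theorem conj_projMatrix_apply (i j : ι) : conj (projMatrix K i j) = projMatrix K j i := by
  simp only [projMatrix_apply_eq_inner, inner_conj_symm]
  exact K.inner_starProjection_left_eq_right _ _

theorem sum_projMatrix_smul (v : ι → H) (j : ι) :
    ∑ i, projMatrix K i j • v i = rowMap v (K.starProjection (EuclideanSpace.single j 1)) := by
  simp [projMatrix]

theorem sum_conj_projMatrix_smul (v : ι → H) (i : ι) :
    ∑ j, conj (projMatrix K i j) • v j =
      rowMap v (K.starProjection (EuclideanSpace.single i 1)) := by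
  simp_rw [conj_projMatrix_apply, sum_projMatrix_smul]

end Rows

theorem stmt1 {H : Type*} [NormedAddCommGroup H] [InnerProductSpace ℂ H]
    (n : ℕ) (x y : Fin n → H) :
    (∑ i : Fin n, rankOne (x i) (y i)) = 0 ↔
      ∃ A : Matrix (Fin n) (Fin n) ℂ,
        (∀ i j, ‖A i j‖ ≤ 1) ∧
        (∀ j : Fin n, ∑ i : Fin n, ((1 : Matrix (Fin n) (Fin n) ℂ) - A) i j • x i = 0) ∧
        (∀ i : Fin n, ∑ j : Fin n, conj (A i j) • y j = 0) := by
  refine ⟨fun h => ?_, fun ⟨A, _, hx, hy⟩ => sum_rankOne_eq_zero_of_row_relations x y A hx hy⟩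
  set K := LinearMap.ker (rowMap x)
  refine ⟨projMatrix Kᗮ, norm_projMatrix_apply_le Kᗮ, fun j => ?_, fun i => ?_⟩
  · rw [projMatrix_orthogonal, sub_sub_cancel, sum_projMatrix_smul]
    exact K.starProjection_apply_mem _
  · rw [sum_conj_projMatrix_smul]
    exact rowMap_eq_zero_of_mem_orthogonal_ker h (Kᗮ.starProjection_apply_mem _)
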